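/- The quasi-monotonic surjections are precisely the maps u_α: for every multi-index α of length k and dimension ≤ n, the map u_α : [n] → [n−k] is a surjective quasi-monotonic function; and conversely, every surjective quasi-monotonic function h : [n] → [m] (so m ≤ n) is equal to u_α for some multi-index α of length n−m and dimension ≤ n. -/

import Mathlib

/-!
Each `u_i` is a surjective quasi-monotonic map and both properties survive composition, so every
`u_α` is one. Conversely, a surjective quasi-monotonic map is determined by its zeros: at the first
point `x` where two such maps `f`, `g` with the same zeros differ, say `f x < g x`, the value `f x`
is `g w` for some `w`, and `w < x` contradicts the strict monotonicity of `f`, `w > x` that of `g`.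
Since `u_α` vanishes exactly at `0` and at the entries of `α`, a surjective quasi-monotonic `h` is
`u_α` for `α` the increasing list of its nonzero zeros.
-/

/-- The elementary coface `d_i^{(n+1)} : [n] → [n+1]` (monotonic injection omitting `i`):
`k ↦ k` for `k < i` and `k ↦ k+1` for `k ≥ i`. -/
def dMap (n i : ℕ) : Fin (n + 1) → Fin (n + 2) :=
  fun k => if (k : ℕ) < i then ⟨k, by omega⟩ else ⟨(k : ℕ) + 1, by omega⟩

/-- The elementary quasi-codegeneracy `u_i^{(n)} : [n+1] → [n]`:
`u_i 0 = u_i i = 0`, `u_i k = k` for `1 ≤ k ≤ i-1`, and `u_i k = k-1` for `k > i`. -/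
def uMap (n i : ℕ) : Fin (n + 2) → Fin (n + 1) :=
  fun k => if (k : ℕ) = 0 ∨ (k : ℕ) = i then 0
    else if h : (k : ℕ) < i ∧ (k : ℕ) < n + 1 then ⟨k, h.2⟩
    else ⟨(k : ℕ) - 1, by omega⟩

/-- A function `f : [n] → [m]` is quasi-monotonic if `f 0 = 0` and `f` is strictly
monotonic outside the preimage of `0`. -/
def QuasiMonotonic {n m : ℕ} (f : Fin (n + 1) → Fin (m + 1)) : Prop :=
  f 0 = 0 ∧ ∀ p q : Fin (n + 1), p < q → f p ≠ 0 → f q ≠ 0 → f p < f q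

/-- A multi-index of dimension `≤ n`: a strictly increasing sequence of indices
`i_1 < … < i_k` with `1 ≤ i_p ≤ n` for all `p` (its length is `α.length`). -/
def IsMultiIndex (n : ℕ) (α : List ℕ) : Prop :=
  List.Chain' (· < ·) α ∧ ∀ i ∈ α, 1 ≤ i ∧ i ≤ n

/-- The quasi-codegeneracy `u_α = u_{i_1} ∘ u_{i_2} ∘ ⋯ ∘ u_{i_k} : [n] → [n-k]`
associated to a multi-index `α = (i_1, …, i_k)`; each elementary factor is taken at the
appropriate dimension (`u_{i_k}` is applied first, at the highest dimension). -/
def uComp (n : ℕ) : (α : List ℕ) → α.length ≤ n → Fin (n + 1) → Fin (n - α.length + 1)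
  | [], _ => fun k => k
  | i :: rest, h => fun k =>
      Fin.cast (by simp only [List.length_cons] at h ⊢; omega)
        (uMap (n - rest.length - 1) i
          (Fin.cast (by simp only [List.length_cons] at h; omega)
            (uComp n rest (by simp only [List.length_cons] at h; omega) k)))

/-- The coface `d_α = d_{i_k} ∘ d_{i_{k-1}} ∘ ⋯ ∘ d_{i_1} : [n-k] → [n]`
associated to a multi-index `α = (i_1, …, i_k)`; each elementary factor is taken at the
appropriate dimension (`d_{i_1}` is applied first, at the lowest dimension). -/
def dComp (n : ℕ) : (α : List ℕ) → α.length ≤ n → Fin (n - α.length + 1) → Fin (n + 1)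
  | [], _ => fun k => k
  | i :: rest, h => fun k =>
      dComp n rest (by simp only [List.length_cons] at h; omega)
        (Fin.cast (by simp only [List.length_cons] at h; omega)
          (dMap (n - rest.length - 1) i
            (Fin.cast (by simp only [List.length_cons] at h ⊢; omega) k)))

namespace QuasiMonotonic

variable {n m k : ℕ}

theorem comp {f : Fin (n + 1) → Fin (m + 1)} {g : Fin (m + 1) → Fin (k + 1)}
    (hg : QuasiMonotonic g) (hf : QuasiMonotonic f) : QuasiMonotonic (g ∘ f) := by
  refine ⟨by simp [hf.1, hg.1], fun p q hpq hp hq => hg.2 _ _ ?_ hp hq⟩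
  have ne_zero {x} (hx : g (f x) ≠ 0) : f x ≠ 0 := fun h => hx (by rw [h, hg.1])
  exact hf.2 p q hpq (ne_zero hp) (ne_zero hq)

theorem finCast (h : n + 1 = m + 1) : QuasiMonotonic (Fin.cast h) :=
  ⟨Fin.cast_zero h, fun _ _ hpq _ _ => Fin.cast_strictMono h hpq⟩

theorem not_val_lt_of_eq_below {m' : ℕ} {f : Fin (n + 1) → Fin (m + 1)}
    {g : Fin (n + 1) → Fin (m' + 1)} (hf : QuasiMonotonic f) (hg : QuasiMonotonic g)
    (hgs : Function.Surjective g) {x : Fin (n + 1)} (hx : f x ≠ 0)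
    (hbelow : ∀ w < x, (f w : ℕ) = g w) : ¬ (f x : ℕ) < g x := by
  intro hlt
  obtain ⟨w, hw⟩ := hgs ⟨f x, by omega⟩
  have hw_val : (g w : ℕ) = f x := congrArg Fin.val hw
  have hgw : g w ≠ 0 := fun h => hx (Fin.ext (by simp [← hw_val, h]))
  rcases lt_trichotomy w x with hwx | rfl | hxw
  · have hfw : f w ≠ 0 := fun h => hgw (Fin.ext (by simp [← hbelow w hwx, h]))
    have := Fin.lt_def.1 (hf.2 w x hwx hfw hx)
    have := hbelow w hwx
    omega
  · omega
  · have := Fin.lt_def.1 (hg.2 x w hxw (fun h => by simp [h] at hlt) hgw)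
    omega

theorem val_eq_of_surjective {m' : ℕ} {f : Fin (n + 1) → Fin (m + 1)}
    {g : Fin (n + 1) → Fin (m' + 1)} (hf : QuasiMonotonic f) (hg : QuasiMonotonic g)
    (hfs : Function.Surjective f) (hgs : Function.Surjective g)
    (hzero : ∀ x, f x = 0 ↔ g x = 0) (x : Fin (n + 1)) : (f x : ℕ) = g x := by
  induction x using WellFoundedLT.induction with
  | _ x ih =>
    by_cases hx : f x = 0
    · simp [hx, (hzero x).1 hx]
    · have hx' : g x ≠ 0 := fun h => hx ((hzero x).2 h)
      exact le_antisymm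
        (not_lt.1 (not_val_lt_of_eq_below hg hf hfs hx' fun w hw => (ih w hw).symm))
        (not_lt.1 (not_val_lt_of_eq_below hf hg hgs hx ih))

end QuasiMonotonic

theorem eq_of_surjective_of_val_eq {n m m' : ℕ} {f : Fin (n + 1) → Fin (m + 1)}
    {g : Fin (n + 1) → Fin (m' + 1)} (hfs : Function.Surjective f)
    (hgs : Function.Surjective g) (hfg : ∀ x, (f x : ℕ) = g x) : m = m' := by
  obtain ⟨x, hx⟩ := hfs (Fin.last m)
  obtain ⟨y, hy⟩ := hgs (Fin.last m')
  have hm : m = g x := by rw [← hfg, hx, Fin.val_last]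
  have hm' : m' = f y := by rw [hfg, hy, Fin.val_last]
  have := (f y).isLt
  have := (g x).isLt
  omega

section uMap

variable {n i : ℕ}

theorem val_uMap (hi : i ≤ n + 1) (k : Fin (n + 2)) :
    (uMap n i k : ℕ) = if (k : ℕ) = 0 ∨ (k : ℕ) = i then 0
      else if (k : ℕ) < i then (k : ℕ) else (k : ℕ) - 1 := by
  unfold uMap
  split_ifs <;> simp only [Fin.val_zero] <;> omega

theorem uMap_surjective : Function.Surjective (uMap n i) := by
  intro y
  by_cases hy : (y : ℕ) = 0
  · exact ⟨0, by simp [uMap, Fin.ext_iff, hy]⟩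
  by_cases hyi : (y : ℕ) < i
  · refine ⟨y.castSucc, Fin.ext ?_⟩
    simp [uMap, hy, hyi.ne, hyi, Nat.le_of_lt_succ y.isLt]
  · refine ⟨y.succ, Fin.ext ?_⟩
    simp only [uMap, Fin.val_succ]
    split_ifs <;> simp_all <;> omega

theorem quasiMonotonic_uMap (hi : i ≤ n + 1) : QuasiMonotonic (uMap n i) := by
  refine ⟨by simp [uMap], fun p q hpq hp hq => ?_⟩
  rw [Fin.lt_def] at hpq ⊢
  rw [Ne, Fin.ext_iff, Fin.val_zero] at hp hq
  rw [val_uMap hi p, val_uMap hi q] at *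
  split_ifs at hp hq ⊢ <;> omega

theorem uMap_eq_zero_iff (hi₀ : 1 ≤ i) (hi : i ≤ n + 1) {k : Fin (n + 2)} :
    uMap n i k = 0 ↔ (k : ℕ) = 0 ∨ (k : ℕ) = i := by
  rw [Fin.ext_iff, Fin.val_zero, val_uMap hi]
  split_ifs <;> omega

theorem val_uMap_of_lt (hi : i ≤ n + 1) {k : Fin (n + 2)} (hk : (k : ℕ) < i) :
    (uMap n i k : ℕ) = k := by
  rw [val_uMap hi]
  split_ifs <;> omega

end uMap

namespace IsMultiIndex

variable {n i : ℕ} {α : List ℕ}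

theorem _root_.isMultiIndex_iff :
    IsMultiIndex n α ↔ α.Pairwise (· < ·) ∧ ∀ j ∈ α, 1 ≤ j ∧ j ≤ n :=
  and_congr_left' List.isChain_iff_pairwise

theorem of_cons (h : IsMultiIndex n (i :: α)) : IsMultiIndex n α :=
  isMultiIndex_iff.2
    ⟨(isMultiIndex_iff.1 h).1.of_cons, fun j hj => h.2 j (List.mem_cons_of_mem i hj)⟩

theorem lt_of_mem_cons (h : IsMultiIndex n (i :: α)) {j : ℕ} (hj : j ∈ α) : i < j :=
  List.rel_of_pairwise_cons (isMultiIndex_iff.1 h).1 hj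

theorem one_le_head (h : IsMultiIndex n (i :: α)) : 1 ≤ i :=
  (h.2 i List.mem_cons_self).1

theorem head_add_length_le (h : IsMultiIndex n (i :: α)) : i + α.length ≤ n := by
  induction α generalizing i with
  | nil => simpa using (h.2 i List.mem_cons_self).2
  | cons j α ih =>
    have := h.lt_of_mem_cons List.mem_cons_self
    have := ih h.of_cons
    simp only [List.length_cons]
    omega

theorem length_le (h : IsMultiIndex n α) : α.length ≤ n := by
  cases α with
  | nil => simp
  | cons i α =>
    have := h.one_le_head
    have := h.head_add_length_le
    simp only [List.length_cons]
    omega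

end IsMultiIndex

theorem Fin.cast_surjective {n m : ℕ} (h : n = m) : Function.Surjective (Fin.cast h) :=
  fun y => ⟨Fin.cast h.symm y, rfl⟩

section uComp

variable {n i : ℕ} {α : List ℕ}

theorem uComp_cons (h : (i :: α).length ≤ n) :
    uComp n (i :: α) h = Fin.cast (by simp only [List.length_cons] at h ⊢; omega) ∘
      uMap (n - α.length - 1) i ∘ Fin.cast (by simp only [List.length_cons] at h; omega) ∘
        uComp n α (by simp only [List.length_cons] at h; omega) :=
  rfl

theorem uComp_surjective (hlen : α.length ≤ n) : Function.Surjective (uComp n α hlen) := by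
  induction α with
  | nil => exact Function.surjective_id
  | cons i α ih =>
    rw [uComp_cons]
    exact (Fin.cast_surjective _).comp
      (uMap_surjective.comp ((Fin.cast_surjective _).comp (ih _)))

theorem quasiMonotonic_uComp (hα : IsMultiIndex n α) (hlen : α.length ≤ n) :
    QuasiMonotonic (uComp n α hlen) := by
  induction α with
  | nil => exact ⟨rfl, fun _ _ h _ _ => h⟩
  | cons i α ih =>
    have := hα.head_add_length_le
    rw [uComp_cons]
    exact (QuasiMonotonic.finCast _).comp ((quasiMonotonic_uMap (by omega)).comp
      ((QuasiMonotonic.finCast _).comp (ih hα.of_cons _)))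

theorem val_uComp_of_forall_lt (hα : IsMultiIndex n α) (hlen : α.length ≤ n)
    {x : Fin (n + 1)} (hx : ∀ j ∈ α, (x : ℕ) < j) : (uComp n α hlen x : ℕ) = x := by
  induction α with
  | nil => rfl
  | cons i α ih =>
    have := hα.head_add_length_le
    have hrest := ih hα.of_cons (by omega) fun j hj => hx j (List.mem_cons_of_mem i hj)
    rw [uComp_cons, Function.comp_apply, Function.comp_apply, Function.comp_apply, Fin.val_cast,
      val_uMap_of_lt (by omega), Fin.val_cast, hrest]
    rw [Fin.val_cast, hrest]
    exact hx i List.mem_cons_self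

/-- `u_α` fixes everything below `min α` and is strictly increasing on its nonzero values, so
it takes the value `i < min α` only at `i`. -/
theorem val_uComp_eq_iff_of_cons (hα : IsMultiIndex n (i :: α)) (hlen : α.length ≤ n)
    {x : Fin (n + 1)} (hx : uComp n α hlen x ≠ 0) :
    (uComp n α hlen x : ℕ) = i ↔ (x : ℕ) = i := by
  have hi := hα.head_add_length_le
  have hi₀ := hα.one_le_head
  have fix {y : Fin (n + 1)} (hy : (y : ℕ) ≤ i) : (uComp n α hlen y : ℕ) = y :=
    val_uComp_of_forall_lt hα.of_cons hlen fun j hj => by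
      have := hα.lt_of_mem_cons hj
      omega
  refine ⟨fun hxi => ?_, fun hxi => by rw [fix hxi.le, hxi]⟩
  rcases lt_trichotomy (x : ℕ) i with hlt | heq | hgt
  · rw [fix hlt.le] at hxi
    exact hxi
  · exact heq
  · let y : Fin (n + 1) := ⟨i, by omega⟩
    have hy : (uComp n α hlen y : ℕ) = i := fix le_rfl
    have hy₀ : uComp n α hlen y ≠ 0 := fun h => by simp [h] at hy; omega
    have := Fin.lt_def.1 ((quasiMonotonic_uComp hα.of_cons hlen).2 y x hgt hy₀ hx)
    omega

theorem uComp_eq_zero_iff (hα : IsMultiIndex n α) (hlen : α.length ≤ n) {x : Fin (n + 1)} :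
    uComp n α hlen x = 0 ↔ x = 0 ∨ (x : ℕ) ∈ α := by
  induction α with
  | nil => simp [uComp]
  | cons i α ih =>
    have hi := hα.head_add_length_le
    have hlen' : α.length ≤ n := by omega
    have hzero_cons : uComp n (i :: α) hlen x = 0 ↔
        uComp n α hlen' x = 0 ∨ (uComp n α hlen' x : ℕ) = i := by
      rw [uComp_cons, Function.comp_apply, Function.comp_apply, Function.comp_apply,
        Fin.cast_eq_zero, uMap_eq_zero_iff hα.one_le_head (by omega), Fin.val_cast,
        Fin.val_eq_zero_iff]
    rw [hzero_cons, List.mem_cons]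
    by_cases hu : uComp n α hlen' x = 0
    · have := (ih hα.of_cons hlen').1 hu
      tauto
    · have := (ih hα.of_cons hlen').not.1 hu
      rw [val_uComp_eq_iff_of_cons hα hlen' hu]
      tauto

end uComp

section zeroIndex

variable {n m : ℕ}

def zeroIndex (f : Fin (n + 1) → Fin (m + 1)) : List ℕ :=
  ((List.finRange (n + 1)).filter fun k => k ≠ 0 ∧ f k = 0).map Fin.val

theorem mem_zeroIndex {f : Fin (n + 1) → Fin (m + 1)} {x : Fin (n + 1)} :
    (x : ℕ) ∈ zeroIndex f ↔ x ≠ 0 ∧ f x = 0 := by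
  simp [zeroIndex, Fin.val_inj]

theorem isMultiIndex_zeroIndex (f : Fin (n + 1) → Fin (m + 1)) :
    IsMultiIndex n (zeroIndex f) := by
  refine isMultiIndex_iff.2 ⟨List.pairwise_map.2 ((List.pairwise_lt_finRange _).filter _),
    fun j hj => ?_⟩
  obtain ⟨k, hk, rfl⟩ := List.mem_map.1 hj
  have hk0 : k ≠ 0 := (of_decide_eq_true (List.mem_filter.1 hk).2).1
  have := Fin.pos_iff_ne_zero.2 hk0
  have := k.isLt
  constructor <;> omega

end zeroIndex

/-- the quasi-monotonic surjections are precisely the maps `u_α`. -/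
theorem quasiMonotonic_surjections :
    -- every `u_α` is a surjective quasi-monotonic function
    (∀ (n : ℕ) (α : List ℕ) (hmi : IsMultiIndex n α) (hlen : α.length ≤ n),
      Function.Surjective (uComp n α hlen) ∧ QuasiMonotonic (uComp n α hlen)) ∧
    -- conversely, every surjective quasi-monotonic `h : [n] → [m]` is some `u_α`
    (∀ (n m : ℕ) (h : Fin (n + 1) → Fin (m + 1)),
      Function.Surjective h → QuasiMonotonic h →
      ∃ (hmn : m ≤ n) (α : List ℕ) (hlen : α.length ≤ n),
        IsMultiIndex n α ∧
          ∃ _ : α.length = n - m,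
            ∀ x : Fin (n + 1), h x = Fin.cast (by omega) (uComp n α hlen x)) := by
  refine ⟨fun n α hα hlen => ⟨uComp_surjective hlen, quasiMonotonic_uComp hα hlen⟩,
    fun n m h hs hq => ?_⟩
  have hα := isMultiIndex_zeroIndex h
  have hlen := hα.length_le
  have hzero (x : Fin (n + 1)) : h x = 0 ↔ uComp n (zeroIndex h) hlen x = 0 := by
    rw [uComp_eq_zero_iff hα, mem_zeroIndex]
    by_cases hx : x = 0 <;> simp [hx, hq.1]
  have heq :=
    hq.val_eq_of_surjective (quasiMonotonic_uComp hα hlen) hs (uComp_surjective hlen) hzero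
  have hm := eq_of_surjective_of_val_eq hs (uComp_surjective hlen) heq
  exact ⟨by omega, zeroIndex h, hlen, hα, by omega, fun x => Fin.ext (heq x)⟩
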